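/- Let E be an empty state with S_k ↦ E, not S_{k+1} ↦ E, and ℓ(E) = 2k+1. Then E is weakly embanked if and only if both a_0(E) < 2^{2k+1} − 1 and a_1(E) < 3·2^{2k} − 1. -/

import Mathlib

open scoped Classical

namespace Skelet17

/-- The five kinds of transition rules. -/
inductive Rule
  | overflow | halt | zero | halve | increment
  deriving DecidableEq

/-- A state `(a_ℓ, …, a_1, a_0)` (written left to right, `a_0` rightmost) is stored
as the list `[a_0, a_1, …, a_ℓ]`, i.e. with the *rightmost* entry first. -/
abbrev State := List ℤ

/-- The leftmost entry `a_ℓ` of a state. -/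
def leftmost (S : State) : ℤ := S.getLastD 0

/-- The entry `a_i(S)`. -/
def entry (S : State) (i : ℕ) : ℤ := S.getD i 0

/-- `ℓ(S) = |S| - 1`. -/
def ell (S : State) : ℕ := S.length - 1

/-- The Overflow rule applies: the leftmost entry is odd and all other entries are even. -/
def OverflowCond (S : State) : Prop := Odd (leftmost S) ∧ ∀ x ∈ S.dropLast, Even x

/-- The Halt rule applies: all entries are even and the two leftmost entries are `0`. -/
def HaltCond (S : State) : Prop :=
  (∀ x ∈ S, Even x) ∧ S.getLastD 1 = 0 ∧ S.dropLast.getLastD 1 = 0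

/-- The Zero rule applies: all entries are even and the Halt rule does not apply. -/
def ZeroCond (S : State) : Prop := (∀ x ∈ S, Even x) ∧ ¬ HaltCond S

/-- The Halve rule applies: `a_0 = -1` and none of the earlier rules applies. -/
def HalveCond (S : State) : Prop :=
  ¬ OverflowCond S ∧ ¬ HaltCond S ∧ ¬ ZeroCond S ∧ S.headD 0 = -1

/-- The rule applied to a state (the first matching rule). -/
noncomputable def ruleOf (S : State) : Rule :=
  if OverflowCond S then .overflow
  else if HaltCond S then .halt
  else if ZeroCond S then .zero
  else if S.headD 0 = -1 then .halve
  else .increment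

/-- The transition function `P`.  (On a Halt state the process stops; we set `P S = S` there.)
Recall the list stores `a_0` first, so e.g. the Overflow rule
`(2a_ℓ+1, 2a_{ℓ-1}, …, 2a_0) ↦ (0, 2a_ℓ+2, 2a_{ℓ-1}, …, 2a_0)` appends a `0` at the end of
the list and adds `1` to the previously last element. -/
noncomputable def P (S : State) : State :=
  match ruleOf S with
  | .overflow => S.dropLast ++ [leftmost S + 1, 0]
  | .halt => S
  | .zero => (S.set 0 (S.headD 0 - 1)).set (S.length - 1) (leftmost S + 1) ++ [0, 0]
  | .halve => S.tail
  | .increment =>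
      let i := S.findIdx (fun x => x % 2 != 0)   -- index of the rightmost odd entry
      (S.set (i + 1) (S.getD (i + 1) 0 + 1)).set 0 (S.headD 0 - 1)

/-- `S ↦ T` : some iterate of `P` sends `S` to `T`. -/
def Reaches (S T : State) : Prop := ∃ m : ℕ, P^[m] S = T

/-- `σ(S) = +1` if the sum of the entries is odd, `-1` if it is even. -/
noncomputable def sigma (S : State) : ℤ := if Odd S.sum then 1 else -1

/-- `n(S)`: the natural number whose Gray code digits (least significant first) are
`a_1 mod 2, a_2 mod 2, …, a_ℓ mod 2`.  Equivalently (standard Gray-code decoding),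
bit `i` of `n(S)` is the parity of `a_{i+1} + ⋯ + a_ℓ`. -/
def nOf (S : State) : ℕ :=
  ∑ i ∈ Finset.range (ell S),
    2 ^ i * ((∑ j ∈ Finset.Icc (i + 1) (ell S), entry S j) % 2).toNat

/-- `⟨a / 2^j⟩` : the nearest integer to `a / 2^j`, rounding half-integers up. -/
def nearest (j a : ℕ) : ℕ := (2 * a + 2 ^ j) / 2 ^ (j + 1)

/-- `d_j(a, b) = |⟨a/2^j⟩ - ⟨b/2^j⟩|`. -/
def dd (j a b : ℕ) : ℕ := Nat.dist (nearest j a) (nearest j b)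

/-- `S_k = (0, 2, 2^2, …, 2^{2k}, 0)`. -/
def Sk (k : ℕ) : State :=
  0 :: (((List.range (2 * k)).map fun i => (2 : ℤ) ^ (2 * k - i)) ++ [0])

/-- An empty state: `n(E) = 0`, `σ(E) = -1`, and the next rule applied is not Halt. -/
def IsEmptyState (E : State) : Prop :=
  E ≠ [] ∧ nOf E = 0 ∧ sigma E = -1 ∧ ruleOf E ≠ Rule.halt

/-- `m` is the first positive time at which the trajectory of `E` is at an empty state. -/
def NextEmptyAt (E : State) (m : ℕ) : Prop :=
  0 < m ∧ IsEmptyState (P^[m] E) ∧ ∀ t, 0 < t → t < m → ¬ IsEmptyState (P^[t] E)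

/-- `N(E)` : the next empty state after `E` (junk value `[]` if it does not exist). -/
noncomputable def N (E : State) : State :=
  if h : ∃ m, NextEmptyAt E m then P^[h.choose] E else []

/-- The rule applied at time `j` belongs to `T_E`, the sequence of rules from `E` to the
next empty state after `E` (all rules after `E` when no next empty state exists). -/
def InTE (E : State) (j : ℕ) : Prop := ∀ t, 0 < t → t ≤ j → ¬ IsEmptyState (P^[t] E)

/-- Weakly embanked: `T_E` consists of one Zero rule at the start and contains at least two
Halve rules, and all other rules before the second Halve rule are Increment rules. -/
def WeaklyEmbanked (E : State) : Prop :=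
  IsEmptyState E ∧
  ∃ j₁ j₂, 0 < j₁ ∧ j₁ < j₂ ∧ InTE E j₂ ∧
    ruleOf (P^[j₁] E) = Rule.halve ∧ ruleOf (P^[j₂] E) = Rule.halve ∧
    ∀ t, 0 < t → t < j₂ → t ≠ j₁ → ruleOf (P^[t] E) = Rule.increment

/-- Embanked: the next empty state `N(E)` exists and the non-Increment rules of `T_E` consist
of exactly one Zero rule at the start and exactly two Halve rules elsewhere. -/
def Embanked (E : State) : Prop :=
  IsEmptyState E ∧
  ∃ m j₁ j₂, NextEmptyAt E m ∧ 0 < j₁ ∧ j₁ < j₂ ∧ j₂ < m ∧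
    ruleOf (P^[j₁] E) = Rule.halve ∧ ruleOf (P^[j₂] E) = Rule.halve ∧
    ∀ t, 0 < t → t < m → t ≠ j₁ → t ≠ j₂ → ruleOf (P^[t] E) = Rule.increment

/-- `h_i(E)` (`i ∈ {1,2}`): the value of `n` at the state immediately *after* the `i`-th
Halve rule applied after `E`. -/
noncomputable def hVal (E : State) (i : ℕ) : ℕ :=
  nOf (P^[Nat.nth (fun j => ruleOf (P^[j] E) = Rule.halve) (i - 1) + 1] E)

/-- `s_i(E)` (`i ∈ {1,2}`): the value of `n` at the state immediately *before* the `i`-th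
Halve rule applied after `E`. -/
noncomputable def sVal (E : State) (i : ℕ) : ℕ :=
  nOf (P^[Nat.nth (fun j => ruleOf (P^[j] E) = Rule.halve) (i - 1)] E)

/-- `E[i]` : the state `E` with the entry `a_i` replaced by `a_i + 2`. -/
def bump (E : State) (i : ℕ) : State := E.set i (E.getD i 0 + 2)

/-- `N'(E) = N^{⌈(i+1)/2⌉}(E)` for an embanked state `E` with `N(E) = E[i]`
(junk value `E` if no such `i` exists). -/
noncomputable def N' (E : State) : State :=
  if h : ∃ i, i < E.length ∧ N E = bump E i then N^[(h.choose + 2) / 2] E else E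

/-- A rooted embanked state: an embanked state obtained from `S_k` by applying `N'`
some number of times. -/
def RootedEmbanked (k : ℕ) (E : State) : Prop :=
  Embanked E ∧ ∃ e : ℕ, N'^[e] (Sk k) = E

/-- `κ_{E→E'}(j)` : the number of steps `S ↦ N(S)` with `N(S) = S[j]` along the chain
`E, N(E), N²(E), …, N^[t](E) = E'`. -/
noncomputable def kappa (E : State) (t j : ℕ) : ℕ :=
  ((Finset.range t).filter fun s => N (N^[s] E) = bump (N^[s] E) j).card


/-!
The Zero rule turns `E` into a state with `n = 2^{2k+1} - 1`, even entry sum and odd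
`a_0 = a_0(E) - 1`. Along a run of Increment rules, `n` moves by one per step in the direction
`σ`, which stays constant (flipping one digit of a Gray code), `a_0` drops by one, and
`a_1 + ⌈a_0 / 2⌉` is invariant. In the first run `n` counts down: if `a_0(E) ≥ 2^{2k+1}` it
reaches `0` while `a_0` is even, and the next rule is Zero or Halt rather than Halve.
Otherwise `a_0` reaches `-1` first and the Halve rule leaves `σ = 1`,
`n = 2^{2k} - 1 - a_0(E)/2` and `a_0 = a_1(E) + a_0(E)/2`. Now `n` counts up, and `a_0`
reaches `-1` (a second Halve) before `n` reaches `2^{2k+2} - 1` (an Overflow, `a_0` being even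
then) exactly when `a_1(E) < 3·2^{2k} - 1`. Nonnegativity of the entries, inherited from `S_k`,
keeps the runs going.
-/

lemma entry_cons_zero (a : ℤ) (l : State) : entry (a :: l) 0 = a := rfl

lemma entry_eq_getElem {S : State} {i : ℕ} (h : i < S.length) : entry S i = S[i] :=
  List.getD_eq_getElem _ _ h

lemma entry_of_length_le {S : State} {i : ℕ} (h : S.length ≤ i) : entry S i = 0 :=
  List.getD_eq_default _ _ h

lemma headD_eq_entry (S : State) : S.headD 0 = entry S 0 := by cases S <;> rfl

lemma entry_tail (S : State) (m : ℕ) : entry S.tail m = entry S (m + 1) := by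
  cases S <;> simp [entry]

lemma entry_set {S : State} {n : ℕ} (hn : n < S.length) (a : ℤ) (m : ℕ) :
    entry (S.set n a) m = if m = n then a else entry S m := by
  by_cases hm : m = n
  · simp [entry, hm, hn]
  · simp [entry, hm, Ne.symm hm]

lemma entry_append_zeros (S : State) (m : ℕ) : entry (S ++ [0, 0]) m = entry S m := by
  by_cases h : m < S.length
  · exact List.getD_append _ _ _ _ h
  · rw [entry, List.getD_append_right _ _ _ _ (by omega), entry_of_length_le (by omega)]
    rcases m - S.length with _ | _ | _ <;> rfl

lemma entry_append (S T : State) (m : ℕ) :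
    entry (S ++ T) m = if m < S.length then entry S m else entry T (m - S.length) := by
  split_ifs with h
  · exact List.getD_append _ _ _ _ h
  · exact List.getD_append_right _ _ _ _ (by omega)

lemma leftmost_eq_entry (S : State) : leftmost S = entry S (ell S) := by
  rw [leftmost, List.getLastD_eq_getLast?, List.getLast?_eq_getElem?, entry,
    List.getD_eq_getElem?_getD, ell]

lemma forall_mem_iff_entry (S : State) (p : ℤ → Prop) :
    (∀ x ∈ S, p x) ↔ ∀ i < S.length, p (entry S i) := by
  rw [List.forall_mem_iff_getElem]
  exact ⟨fun h i hi => by rw [entry_eq_getElem hi]; exact h i hi,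
    fun h i hi => by rw [← entry_eq_getElem hi]; exact h i hi⟩

lemma even_entry_of_forall_mem_even {S : State} (h : ∀ x ∈ S, Even x) (j : ℕ) :
    Even (entry S j) := by
  rcases Nat.lt_or_ge j S.length with hj | hj
  · exact (forall_mem_iff_entry S _).1 h j hj
  · rw [entry_of_length_le hj]
    exact Even.zero

lemma sum_eq_sum_entry (S : State) : S.sum = ∑ j ∈ Finset.range S.length, entry S j := by
  induction S with
  | nil => simp
  | cons a l ih =>
    rw [List.sum_cons, List.length_cons, Finset.sum_range_succ', ih, add_comm]
    rfl

section Binary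

open Finset

lemma sum_range_two_pow (n : ℕ) : ∑ m ∈ range n, (2 : ℤ) ^ m = 2 ^ n - 1 := by
  simpa using geom_sum_mul (2 : ℤ) n

lemma sum_two_pow_mul_eq_zero_iff {n : ℕ} {b : ℕ → ℤ} (hb : ∀ m, 0 ≤ b m) :
    ∑ m ∈ range n, 2 ^ m * b m = 0 ↔ ∀ m < n, b m = 0 := by
  rw [sum_eq_zero_iff_of_nonneg fun m _ => mul_nonneg (by positivity) (hb m)]
  simp

lemma sum_two_pow_mul_eq_two_pow_sub_one_iff {n : ℕ} {b : ℕ → ℤ} (hb : ∀ m, b m ≤ 1) :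
    ∑ m ∈ range n, 2 ^ m * b m = 2 ^ n - 1 ↔ ∀ m < n, b m = 1 := by
  have key := sum_two_pow_mul_eq_zero_iff (n := n) (b := fun m => 1 - b m) (by grind)
  simp only [mul_sub, mul_one, sum_sub_distrib, sum_range_two_pow, sub_eq_zero] at key
  grind

lemma sum_two_pow_mul_ite_lt {n p : ℕ} (hp : p ≤ n) :
    ∑ m ∈ range n, 2 ^ m * (if m < p then 1 else 0 : ℤ) = 2 ^ p - 1 := by
  rw [← sum_range_add_sum_Ico _ hp, ← sum_range_two_pow,
    ← add_zero (∑ m ∈ range p, (2 : ℤ) ^ m)]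
  congr 1
  · exact sum_congr rfl fun m hm => by rw [if_pos (mem_range.1 hm), mul_one]
  · exact sum_eq_zero fun m hm => by rw [if_neg (not_lt.2 (mem_Ico.1 hm).1), mul_zero]

/-- The Gray-code increment, read on binary digits. -/
lemma sum_two_pow_mul_flip {n i : ℕ} (hi : i < n) {b b' : ℕ → ℤ}
    (hlow : ∀ m < i, b m = 1 - b i) (hflip : ∀ m ≤ i, b' m = 1 - b m)
    (hhigh : ∀ m, i < m → b' m = b m) :
    ∑ m ∈ range n, 2 ^ m * b' m = ∑ m ∈ range n, 2 ^ m * b m + (1 - 2 * b i) := by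
  have hterm : ∀ m ∈ range i, 2 ^ m * b' m - 2 ^ m * b m = 2 ^ m * (2 * b i - 1) :=
    fun m hm => by rw [hflip m (mem_range.1 hm).le, hlow m (mem_range.1 hm)]; ring
  rw [← sub_eq_iff_eq_add', ← sum_sub_distrib, ← sum_range_add_sum_Ico _ hi,
    sum_eq_zero (s := Ico _ _) fun m hm => by rw [hhigh m (mem_Ico.1 hm).1, sub_self],
    sum_range_succ, sum_congr rfl hterm, ← sum_mul, sum_range_two_pow, hflip i le_rfl]
  ring

end Binary

section GrayCode

open Finset

variable {S : State}

def suffixSum (S : State) (m : ℕ) : ℤ := ∑ j ∈ Ico m S.length, entry S j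

def nBit (S : State) (m : ℕ) : ℤ := suffixSum S (m + 1) % 2

lemma natCast_nOf (S : State) : (nOf S : ℤ) = ∑ m ∈ range (ell S), 2 ^ m * nBit S m := by
  rw [nOf]
  push_cast
  refine sum_congr rfl fun m _ => ?_
  rw [Int.toNat_of_nonneg (Int.emod_nonneg _ two_ne_zero), nBit, suffixSum]
  congr 3
  ext j
  simp only [mem_Icc, mem_Ico, ell]
  omega

lemma nBit_nonneg (S : State) (m : ℕ) : 0 ≤ nBit S m := Int.emod_nonneg _ two_ne_zero

lemma nBit_le_one (S : State) (m : ℕ) : nBit S m ≤ 1 := by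
  have := Int.emod_lt_of_pos (suffixSum S (m + 1)) two_pos
  rw [nBit]
  omega

lemma suffixSum_eq_entry_add {m : ℕ} (h : m < S.length) :
    suffixSum S m = entry S m + suffixSum S (m + 1) :=
  sum_eq_sum_Ico_succ_bot h _

lemma suffixSum_of_length_le {m : ℕ} (h : S.length ≤ m) : suffixSum S m = 0 := by
  rw [suffixSum, Ico_eq_empty_of_le h, sum_empty]

lemma nBit_ell (S : State) : nBit S (ell S) = 0 := by
  rw [nBit, suffixSum_of_length_le (by rw [ell]; omega), Int.zero_emod]

lemma entry_succ_emod_two {j : ℕ} (hj : j < ell S) :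
    entry S (j + 1) % 2 = (nBit S j - nBit S (j + 1)) % 2 := by
  have := suffixSum_eq_entry_add (S := S) (m := j + 1) (by rw [ell] at hj; omega)
  rw [nBit, nBit]
  omega

lemma nBit_eq_of_entry_emod_two {p : ℕ}
    (h : ∀ j, 1 ≤ j → j < S.length → entry S j % 2 = if j = p then 1 else 0) (m : ℕ) :
    nBit S m = if m < p ∧ p < S.length then 1 else 0 := by
  rw [nBit, suffixSum, sum_int_mod,
    sum_congr rfl fun j hj => h j (by have := mem_Ico.1 hj; omega) (mem_Ico.1 hj).2, sum_ite_eq']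
  simp only [mem_Ico]
  split_ifs <;> first | rfl | omega

lemma natCast_nOf_of_entry_emod_two {p : ℕ} (hp : p ≤ ell S)
    (h : ∀ j, 1 ≤ j → j < S.length → entry S j % 2 = if j = p then 1 else 0) :
    (nOf S : ℤ) = 2 ^ p - 1 := by
  rw [natCast_nOf, ← sum_two_pow_mul_ite_lt hp]
  refine sum_congr rfl fun m _ => ?_
  rw [nBit_eq_of_entry_emod_two h]
  congr 2
  rw [ell] at hp
  exact propext ⟨And.left, fun hm => ⟨hm, by omega⟩⟩

lemma entry_emod_two_of_nBit_eq {c : ℤ} (hc : ∀ m < ell S, nBit S m = c) {j : ℕ}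
    (h1 : 1 ≤ j) (hj : j < S.length) : entry S j % 2 = if j = ell S then c % 2 else 0 := by
  obtain ⟨i, rfl⟩ : ∃ i, j = i + 1 := ⟨j - 1, by omega⟩
  have hi : i < ell S := by rw [ell]; omega
  rw [entry_succ_emod_two hi, hc i hi]
  split_ifs with hell
  · rw [hell, nBit_ell, sub_zero]
  · rw [hc (i + 1) (by omega), sub_self, Int.zero_emod]

lemma nOf_eq_zero_iff (S : State) :
    nOf S = 0 ↔ ∀ j, 1 ≤ j → j < S.length → Even (entry S j) := by
  constructor
  · intro h j h1 hj
    have hbits := (sum_two_pow_mul_eq_zero_iff (nBit_nonneg S)).1 (by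
      rw [← natCast_nOf, h, Nat.cast_zero])
    rw [Int.even_iff, entry_emod_two_of_nBit_eq hbits h1 hj]
    split_ifs <;> rfl
  · intro h
    have := natCast_nOf_of_entry_emod_two (S := S) (Nat.zero_le _) fun j h1 hj => by
      rw [if_neg (by omega)]
      exact Int.even_iff.1 (h j h1 hj)
    omega

lemma even_sum_iff_of_nOf_eq_zero (h : nOf S = 0) : Even S.sum ↔ Even (entry S 0) := by
  rw [sum_eq_sum_entry]
  rcases S.length.eq_zero_or_pos with h0 | h0
  · rw [h0, entry_of_length_le h0.le, sum_range_zero]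
  obtain ⟨n, hn⟩ : ∃ n, S.length = n + 1 := ⟨_, (Nat.succ_pred_eq_of_pos h0).symm⟩
  have heven : Even (∑ i ∈ range n, entry S (i + 1)) := even_sum _ fun i hi =>
    (nOf_eq_zero_iff S).1 h (i + 1) (by omega) (by have := mem_range.1 hi; omega)
  rw [hn, sum_range_succ', Int.even_add]
  exact iff_true_left heven

lemma natCast_nOf_eq_iff (S : State) : (nOf S : ℤ) = 2 ^ ell S - 1 ↔
    ∀ j, 1 ≤ j → j < S.length → entry S j % 2 = if j = ell S then 1 else 0 := by
  refine ⟨fun h j h1 hj => ?_, natCast_nOf_of_entry_emod_two le_rfl⟩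
  rw [natCast_nOf, sum_two_pow_mul_eq_two_pow_sub_one_iff (nBit_le_one S)] at h
  exact entry_emod_two_of_nBit_eq h h1 hj

lemma forall_mem_even_iff (S : State) :
    (∀ x ∈ S, Even x) ↔ nOf S = 0 ∧ Even (entry S 0) := by
  rw [forall_mem_iff_entry, nOf_eq_zero_iff]
  refine ⟨fun h => ⟨fun j _ hj => h j hj, ?_⟩, fun h j hj => ?_⟩
  · rcases S.length.eq_zero_or_pos with h0 | h0
    · rw [entry_of_length_le h0.le]; exact Even.zero
    · exact h 0 h0
  · rcases j.eq_zero_or_pos with rfl | hj0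
    · exact h.2
    · exact h.1 j hj0 hj

lemma entry_dropLast {i : ℕ} (h : i < S.length - 1) : entry S.dropLast i = entry S i := by
  rw [entry_eq_getElem (by simpa using h), List.getElem_dropLast, entry_eq_getElem]

lemma overflowCond_iff (hS : 2 ≤ S.length) :
    OverflowCond S ↔ (nOf S : ℤ) = 2 ^ ell S - 1 ∧ Even (entry S 0) := by
  rw [OverflowCond, natCast_nOf_eq_iff, forall_mem_iff_entry, leftmost_eq_entry,
    List.length_dropLast]
  simp only [Int.odd_iff, Int.even_iff]
  constructor
  · rintro ⟨htop, hlow⟩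
    refine ⟨fun j h1 hj => ?_, by rw [← entry_dropLast (by omega)]; exact hlow 0 (by omega)⟩
    split_ifs with hj'
    · rwa [hj']
    · rw [← entry_dropLast (by rw [ell] at hj'; omega)]
      exact hlow j (by rw [ell] at hj'; omega)
  · rintro ⟨hhigh, h0⟩
    refine ⟨by simpa using hhigh (ell S) (by rw [ell]; omega) (by rw [ell]; omega),
      fun i hi => ?_⟩
    rw [entry_dropLast hi]
    rcases i.eq_zero_or_pos with rfl | hi0
    · exact h0
    · simpa [ell, hi.ne] using hhigh i hi0 (by omega)

end GrayCode

section Rules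

variable {S : State}

lemma ruleOf_eq_increment_iff : ruleOf S = .increment ↔
    ¬ OverflowCond S ∧ ¬ (∀ x ∈ S, Even x) ∧ entry S 0 ≠ -1 := by
  unfold ruleOf
  rw [headD_eq_entry]
  split_ifs with hO hH hZ h0
  · exact iff_of_false (by simp) fun h => h.1 hO
  · exact iff_of_false (by simp) fun h => h.2.1 hH.1
  · exact iff_of_false (by simp) fun h => h.2.1 hZ.1
  · exact iff_of_false (by simp) fun h => h.2.2 h0
  · exact iff_of_true rfl ⟨hO, fun hE => hZ ⟨hE, hH⟩, h0⟩

lemma ruleOf_eq_halve (hS : 2 ≤ S.length) (h0 : entry S 0 = -1) : ruleOf S = .halve := by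
  have hodd : ¬ Even (entry S 0) := by rw [h0]; decide
  have hO : ¬ OverflowCond S := fun h => hodd ((overflowCond_iff hS).1 h).2
  have hE : ¬ ∀ x ∈ S, Even x := fun h => hodd ((forall_mem_even_iff S).1 h).2
  unfold ruleOf
  rw [if_neg hO, if_neg fun h => hE h.1, if_neg fun h => hE h.1, if_pos (by rwa [headD_eq_entry])]

lemma ruleOf_eq_increment (hS : 2 ≤ S.length) (h0 : 0 ≤ entry S 0)
    (hmid : Odd (entry S 0) ∨ 0 < nOf S ∧ (nOf S : ℤ) < 2 ^ ell S - 1) :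
    ruleOf S = .increment := by
  rw [ruleOf_eq_increment_iff, overflowCond_iff hS, forall_mem_even_iff, ← Int.not_odd_iff_even]
  rcases hmid with hodd | ⟨hpos, hlt⟩
  · exact ⟨fun h => h.2 hodd, fun h => h.2 hodd, by omega⟩
  · exact ⟨fun h => absurd h.1 (by omega), fun h => absurd h.1 (by omega), by omega⟩

lemma ruleOf_eq_overflow (hS : 2 ≤ S.length) (hmax : (nOf S : ℤ) = 2 ^ ell S - 1)
    (h0 : Even (entry S 0)) : ruleOf S = .overflow := by
  rw [ruleOf, if_pos ((overflowCond_iff hS).2 ⟨hmax, h0⟩)]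

lemma ruleOf_eq_halt_or_zero (h : ∀ x ∈ S, Even x) : ruleOf S = .halt ∨ ruleOf S = .zero := by
  have hO : ¬ OverflowCond S := by
    rintro ⟨hodd, -⟩
    rw [leftmost_eq_entry] at hodd
    rcases Nat.lt_or_ge (ell S) S.length with hl | hl
    · exact Int.not_odd_iff_even.2 ((forall_mem_iff_entry S _).1 h _ hl) hodd
    · rw [entry_of_length_le hl] at hodd
      exact Int.not_odd_iff_even.2 Even.zero hodd
  unfold ruleOf
  rw [if_neg hO]
  by_cases hH : HaltCond S
  · exact .inl (if_pos hH)
  · exact .inr (by rw [if_neg hH, if_pos ⟨h, hH⟩])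

lemma overflowCond_of_ruleOf_eq (h : ruleOf S = .overflow) : OverflowCond S := by
  unfold ruleOf at h
  split_ifs at h with hO
  exact hO

lemma forall_mem_even_of_ruleOf_eq_zero (h : ruleOf S = .zero) : ∀ x ∈ S, Even x := by
  unfold ruleOf at h
  split_ifs at h with hO hH hZ
  exact hZ.1

lemma P_eq_of_halve (h : ruleOf S = .halve) : P S = S.tail := by
  rw [P, h]

lemma P_eq_of_halt (h : ruleOf S = .halt) : P S = S := by
  rw [P, h]

end Rules

section Increment

open Finset

variable {S : State}

-- The list stores `a_0` first, so its first odd entry is the rightmost one.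
def rightmostOdd (S : State) : ℕ := S.findIdx fun x => x % 2 != 0

lemma P_eq_of_increment (h : ruleOf S = .increment) :
    P S = (S.set (rightmostOdd S + 1) (entry S (rightmostOdd S + 1) + 1)).set 0
      (entry S 0 - 1) := by
  rw [P, h, headD_eq_entry]
  rfl

lemma rightmostOdd_spec (h : ruleOf S = .increment) :
    rightmostOdd S < ell S ∧ Odd (entry S (rightmostOdd S)) ∧
      ∀ j < rightmostOdd S, Even (entry S j) := by
  obtain ⟨hO, hE, -⟩ := ruleOf_eq_increment_iff.1 h
  have hex : ∃ x ∈ S, (x % 2 != 0) = true := by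
    simpa [Int.even_iff] using hE
  have hlt : rightmostOdd S < S.length := List.findIdx_lt_length.2 hex
  have hodd : Odd (entry S (rightmostOdd S)) := by
    have : (S[rightmostOdd S] % 2 != 0) = true := List.findIdx_getElem (w := hlt)
    rw [entry_eq_getElem hlt, Int.odd_iff]
    simpa using this
  have heven : ∀ j < rightmostOdd S, Even (entry S j) := fun j hj => by
    have := List.not_of_lt_findIdx hj
    rw [entry_eq_getElem (hj.trans hlt), Int.even_iff]
    simpa using this
  refine ⟨?_, hodd, heven⟩
  by_contra hge
  refine hO ⟨?_, (forall_mem_iff_entry _ _).2 fun j hj => ?_⟩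
  · rw [leftmost_eq_entry, show ell S = rightmostOdd S by rw [ell] at hge ⊢; omega]
    exact hodd
  · rw [List.length_dropLast] at hj
    rw [entry_dropLast hj]
    exact heven j (by rw [ell] at hge; omega)

lemma entry_P_of_increment (h : ruleOf S = .increment) (m : ℕ) :
    entry (P S) m =
      entry S m + (if m = rightmostOdd S + 1 then 1 else 0) - (if m = 0 then 1 else 0) := by
  have hi := (rightmostOdd_spec h).1
  rw [ell] at hi
  rw [P_eq_of_increment h, entry_set (by rw [List.length_set]; omega), entry_set (by omega)]
  split_ifs <;> subst_vars <;> omega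

lemma length_P_of_increment (h : ruleOf S = .increment) : (P S).length = S.length := by
  rw [P_eq_of_increment h, List.length_set, List.length_set]

lemma entry_zero_P_of_increment (h : ruleOf S = .increment) :
    entry (P S) 0 = entry S 0 - 1 := by
  rw [entry_P_of_increment h, if_neg (by omega), if_pos rfl, add_zero]

lemma ell_P_of_increment (h : ruleOf S = .increment) : ell (P S) = ell S := by
  rw [ell, ell, length_P_of_increment h]

lemma sum_P_of_increment (h : ruleOf S = .increment) : (P S).sum = S.sum := by
  have hi := (rightmostOdd_spec h).1
  rw [ell] at hi
  rw [sum_eq_sum_entry, sum_eq_sum_entry, length_P_of_increment h,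
    sum_congr rfl fun m _ => entry_P_of_increment h m, sum_sub_distrib, sum_add_distrib,
    sum_ite_eq', sum_ite_eq', if_pos (mem_range.2 (by omega)), if_pos (mem_range.2 (by omega)),
    add_sub_cancel_right]

lemma sigma_P_of_increment (h : ruleOf S = .increment) : sigma (P S) = sigma S := by
  rw [sigma, sigma, sum_P_of_increment h]

lemma entry_one_add_P_of_increment (h : ruleOf S = .increment) :
    entry (P S) 1 + (entry (P S) 0 + 1) / 2 = entry S 1 + (entry S 0 + 1) / 2 := by
  obtain ⟨-, hodd, heven⟩ := rightmostOdd_spec h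
  rw [entry_P_of_increment h, entry_P_of_increment h, if_neg (by omega : (0 : ℕ) ≠ _ + 1),
    if_pos rfl, if_neg one_ne_zero]
  rcases Nat.eq_zero_or_pos (rightmostOdd S) with h0 | h0
  · rw [h0, Int.odd_iff] at hodd
    rw [h0, if_pos rfl]
    omega
  · have := Int.even_iff.1 (heven 0 h0)
    rw [if_neg (by omega)]
    omega

lemma odd_sum_Ico_rightmostOdd (h : ruleOf S = .increment) {a : ℕ} (ha : a ≤ rightmostOdd S) :
    Odd (∑ j ∈ Ico a (rightmostOdd S + 1), entry S j) := by
  obtain ⟨-, hodd, heven⟩ := rightmostOdd_spec h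
  rw [sum_Ico_succ_top ha]
  exact (even_sum _ fun j hj => heven j (mem_Ico.1 hj).2).add_odd hodd

lemma suffixSum_eq_add_suffixSum_rightmostOdd (h : ruleOf S = .increment) {a : ℕ}
    (ha : a ≤ rightmostOdd S) :
    suffixSum S a =
      ∑ j ∈ Ico a (rightmostOdd S + 1), entry S j + suffixSum S (rightmostOdd S + 1) := by
  have hi := (rightmostOdd_spec h).1
  rw [ell] at hi
  rw [suffixSum, suffixSum, sum_Ico_consecutive _ (by omega) (by omega)]

lemma nBit_of_lt_rightmostOdd (h : ruleOf S = .increment) {m : ℕ} (hm : m < rightmostOdd S) :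
    nBit S m = 1 - nBit S (rightmostOdd S) := by
  have hsplit := suffixSum_eq_add_suffixSum_rightmostOdd h (a := m + 1) hm
  have hodd := Int.odd_iff.1 (odd_sum_Ico_rightmostOdd h (a := m + 1) hm)
  rw [nBit, nBit]
  omega

lemma sigma_eq_of_increment (h : ruleOf S = .increment) :
    sigma S = 1 - 2 * nBit S (rightmostOdd S) := by
  have hsplit := suffixSum_eq_add_suffixSum_rightmostOdd h (Nat.zero_le _)
  have hodd := Int.odd_iff.1 (odd_sum_Ico_rightmostOdd h (Nat.zero_le _))
  have hsum : S.sum = suffixSum S 0 := by rw [sum_eq_sum_entry, suffixSum, range_eq_Ico]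
  simp only [sigma, nBit, Int.odd_iff, hsum]
  split_ifs <;> omega

lemma nBit_P_of_increment (h : ruleOf S = .increment) (m : ℕ) :
    nBit (P S) m = if m ≤ rightmostOdd S then 1 - nBit S m else nBit S m := by
  have hsuf : suffixSum (P S) (m + 1) =
      suffixSum S (m + 1) + if m ≤ rightmostOdd S then 1 else 0 := by
    have hi := (rightmostOdd_spec h).1
    rw [ell] at hi
    rw [suffixSum, suffixSum, length_P_of_increment h,
      sum_congr rfl fun j hj => by
        rw [entry_P_of_increment h, if_neg (show j ≠ 0 by have := mem_Ico.1 hj; omega), sub_zero],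
      sum_add_distrib, sum_ite_eq']
    simp only [mem_Ico]
    split_ifs <;> first | rfl | omega
  rw [nBit, nBit, hsuf]
  split_ifs <;> omega

lemma natCast_nOf_P_of_increment (h : ruleOf S = .increment) :
    (nOf (P S) : ℤ) = nOf S + sigma S := by
  rw [natCast_nOf, natCast_nOf, ell_P_of_increment h, sigma_eq_of_increment h]
  exact sum_two_pow_mul_flip (rightmostOdd_spec h).1 (fun m => nBit_of_lt_rightmostOdd h)
    (fun m hm => by rw [nBit_P_of_increment h, if_pos hm])
    (fun m hm => by rw [nBit_P_of_increment h, if_neg (by omega)])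

end Increment

section ZeroHalve

open Finset

variable {S : State}

lemma P_eq_of_zero (h : ruleOf S = .zero) :
    P S = (S.set 0 (entry S 0 - 1)).set (ell S) (entry S (ell S) + 1) ++ [0, 0] := by
  rw [P, h, headD_eq_entry, leftmost_eq_entry]
  rfl

lemma length_P_of_zero (h : ruleOf S = .zero) : (P S).length = S.length + 2 := by
  simp [P_eq_of_zero h]

lemma entry_P_of_zero (h : ruleOf S = .zero) (hS : 2 ≤ S.length) (m : ℕ) :
    entry (P S) m = entry S m + (if m = ell S then 1 else 0) - (if m = 0 then 1 else 0) := by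
  rw [P_eq_of_zero h, entry_append_zeros, entry_set (by rw [List.length_set, ell]; omega),
    entry_set (by omega)]
  rw [ell] at *
  split_ifs <;> subst_vars <;> omega

lemma sum_P_of_zero (h : ruleOf S = .zero) (hS : 2 ≤ S.length) : (P S).sum = S.sum := by
  rw [sum_eq_sum_entry, sum_eq_sum_entry, length_P_of_zero h,
    sum_congr rfl fun m _ => entry_P_of_zero h hS m, sum_sub_distrib, sum_add_distrib,
    sum_ite_eq', sum_ite_eq', if_pos (mem_range.2 (by rw [ell]; omega)),
    if_pos (mem_range.2 (by omega)), add_sub_cancel_right, sum_range_succ, sum_range_succ,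
    entry_of_length_le le_rfl, entry_of_length_le (Nat.le_succ _), add_zero, add_zero]

lemma natCast_nOf_P_of_zero (h : ruleOf S = .zero) (hS : 2 ≤ S.length)
    (heven : ∀ x ∈ S, Even x) : (nOf (P S) : ℤ) = 2 ^ ell S - 1 := by
  refine natCast_nOf_of_entry_emod_two (by rw [ell, ell, length_P_of_zero h]; omega)
    fun j h1 _ => ?_
  have := Int.even_iff.1 (even_entry_of_forall_mem_even heven j)
  rw [entry_P_of_zero h hS, if_neg (by omega : j ≠ 0), sub_zero]
  split_ifs <;> omega

lemma suffixSum_tail (S : State) (m : ℕ) : suffixSum S.tail m = suffixSum S (m + 1) := by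
  cases S with
  | nil => simp [suffixSum]
  | cons a l =>
    rw [suffixSum, suffixSum, List.tail_cons, List.length_cons, ← sum_Ico_add']
    rfl

lemma nBit_tail (S : State) (m : ℕ) : nBit S.tail m = nBit S (m + 1) := by
  rw [nBit, nBit, suffixSum_tail]

lemma nOf_tail (hS : 2 ≤ S.length) : nOf S.tail = nOf S / 2 := by
  have hell : ell S = ell S.tail + 1 := by simp only [ell, List.length_tail]; omega
  have key : (nOf S : ℤ) = nBit S 0 + 2 * nOf S.tail := by
    rw [natCast_nOf, natCast_nOf, hell, sum_range_succ', mul_sum, pow_zero, one_mul, add_comm]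
    simp only [nBit_tail, pow_succ]
    congr 1
    exact sum_congr rfl fun m _ => by ring
  have := nBit_nonneg S 0
  have := nBit_le_one S 0
  omega

lemma sigma_tail (h0 : entry S 0 = -1) : sigma S.tail = -sigma S := by
  cases S with
  | nil => exact absurd h0 (by decide)
  | cons a l =>
    rw [entry_cons_zero] at h0
    simp only [sigma, Int.odd_iff, List.tail_cons, List.sum_cons, h0]
    split_ifs <;> omega

end ZeroHalve

section Admissible

variable {S : State}

def Admissible (S : State) : Prop := ∀ i, (if i = 0 then -1 else 0) ≤ entry S i

lemma entry_P_of_overflow (h : ruleOf S = .overflow) (m : ℕ) :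
    entry (P S) m = entry S m + if m = ell S then 1 else 0 := by
  have hS : S ≠ [] := by
    rintro rfl
    simpa [leftmost] using (overflowCond_of_ruleOf_eq h).1
  have hlen := List.length_pos_iff.2 hS
  rw [P, h, leftmost_eq_entry, entry_append, List.length_dropLast]
  by_cases hm : m < S.length - 1
  · rw [if_pos hm, entry_dropLast hm, if_neg (by rw [ell]; omega), add_zero]
  rw [if_neg hm]
  rcases Nat.lt_or_ge m S.length with hlt | hge
  · have hm' : m = ell S := by rw [ell]; omega
    rw [hm', if_pos rfl, show ell S - (S.length - 1) = 0 by rw [ell, Nat.sub_self],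
      entry_cons_zero, add_comm]
  · rw [entry_of_length_le hge, if_neg (by rw [ell]; omega), zero_add]
    rcases hd : m - (S.length - 1) with _ | _ | _ <;> first | omega | rfl

lemma admissible_P (hS : Admissible S) : Admissible (P S) := by
  intro i
  have hi := hS i
  have h0 := hS 0
  rw [if_pos rfl] at h0
  cases hr : ruleOf S with
  | overflow =>
    rw [entry_P_of_overflow hr]
    split_ifs at * <;> omega
  | halt => rwa [P_eq_of_halt hr]
  | zero =>
    rcases Nat.lt_or_ge S.length 2 with hlt | hS2
    · match S, hlt with
      | [], _ => rcases i with _ | _ | _ | i <;> simp [P_eq_of_zero hr, ell, entry]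
      | [a], _ =>
        have hP : P [a] = [a + 1, 0, 0] := by rw [P_eq_of_zero hr]; rfl
        rw [hP]
        rcases i with _ | i
        · exact show -1 ≤ a + 1 by have : -1 ≤ a := h0; omega
        · rcases i with _ | _ | i <;> simp [entry]
    · have heven := Int.even_iff.1
        (even_entry_of_forall_mem_even (forall_mem_even_of_ruleOf_eq_zero hr) 0)
      have : ell S = S.length - 1 := rfl
      rw [entry_P_of_zero hr hS2]
      split_ifs at * <;> subst_vars <;> omega
  | halve =>
    have := hS (i + 1)
    rw [P_eq_of_halve hr, entry_tail]
    split_ifs at * <;> omega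
  | increment =>
    have hne := (ruleOf_eq_increment_iff.1 hr).2.2
    rw [entry_P_of_increment hr]
    split_ifs at * <;> subst_vars <;> omega

lemma admissible_iterate (hS : Admissible S) (m : ℕ) : Admissible (P^[m] S) := by
  induction m with
  | zero => exact hS
  | succ m ih => rw [Function.iterate_succ_apply']; exact admissible_P ih

lemma admissible_Sk (k : ℕ) : Admissible (Sk k) := by
  have hnonneg : ∀ x ∈ Sk k, 0 ≤ x := by
    simp only [Sk, List.mem_cons, List.mem_append, List.mem_map, List.mem_range]
    rintro x (rfl | ⟨i, -, rfl⟩ | rfl | h) <;> first | positivity | simp at h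
  intro i
  rcases Nat.lt_or_ge i (Sk k).length with hi | hi
  · have := (forall_mem_iff_entry _ _).1 hnonneg i hi
    split_ifs <;> omega
  · rw [entry_of_length_le hi]
    split_ifs <;> omega

end Admissible

section Runs

variable {S : State}

lemma iterate_of_forall_increment {t : ℕ} (h : ∀ s < t, ruleOf (P^[s] S) = .increment) :
    (P^[t] S).length = S.length ∧ sigma (P^[t] S) = sigma S ∧
      entry (P^[t] S) 0 = entry S 0 - t ∧
      entry (P^[t] S) 1 + (entry (P^[t] S) 0 + 1) / 2 = entry S 1 + (entry S 0 + 1) / 2 ∧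
      (nOf (P^[t] S) : ℤ) = nOf S + sigma S * t := by
  induction t with
  | zero => simp
  | succ t ih =>
    obtain ⟨hl, hs, h0, h1, hn⟩ := ih fun s hs => h s (by omega)
    have hr := h t (by omega)
    rw [Function.iterate_succ_apply', length_P_of_increment hr, sigma_P_of_increment hr,
      entry_one_add_P_of_increment hr, entry_zero_P_of_increment hr, natCast_nOf_P_of_increment hr,
      hl, hs, h1, h0, hn]
    push_cast
    exact ⟨rfl, rfl, by ring, rfl, by ring⟩

lemma forall_ruleOf_eq_increment {t : ℕ} (hS : 2 ≤ S.length)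
    (h : ∀ s < t, (s : ℤ) ≤ entry S 0 ∧ (Odd (entry S 0 - s) ∨
      0 < (nOf S : ℤ) + sigma S * s ∧ (nOf S : ℤ) + sigma S * s < 2 ^ ell S - 1)) :
    ∀ s < t, ruleOf (P^[s] S) = .increment := by
  induction t with
  | zero => intro s hs; omega
  | succ t ih =>
    have ih := ih fun s hs => h s (by omega)
    intro s hs
    rcases Nat.lt_succ_iff_lt_or_eq.1 hs with hs | rfl
    · exact ih s hs
    obtain ⟨hl, -, h0, -, hn⟩ := iterate_of_forall_increment ih
    obtain ⟨ha, hmid⟩ := h s hs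
    have hell : ell (P^[s] S) = ell S := by rw [ell, ell, hl]
    refine ruleOf_eq_increment (by omega) (by omega) ?_
    rw [h0, hell]
    exact hmid.imp id fun h => ⟨by omega, by omega⟩

end Runs

lemma not_weaklyEmbanked_of_blocked {E : State} {u j : ℕ} (hu : 0 < u)
    (hinc : ruleOf (P^[u] E) ≠ .increment) (hhalve : ruleOf (P^[u] E) ≠ .halve)
    (hbefore : ∀ t, 0 < t → t < u → t ≠ j → ruleOf (P^[t] E) = .increment) :
    ¬ WeaklyEmbanked E := by
  rintro ⟨-, j₁, j₂, hj₁, hj₁₂, -, hh₁, hh₂, hall⟩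
  have only_j : ∀ t, 0 < t → t < u → ruleOf (P^[t] E) = .halve → t = j := by
    intro t ht htu hh
    by_contra hne
    rw [hbefore t ht htu hne] at hh
    cases hh
  rcases lt_trichotomy j₂ u with hlt | rfl | hgt
  · have := only_j j₂ (by omega) hlt hh₂
    have := only_j j₁ hj₁ (by omega) hh₁
    omega
  · exact hhalve hh₂
  · exact hinc (hall u hu hgt fun h => hhalve (h ▸ hh₁))

/-- What the proof uses of the hypotheses on `E`. -/
structure LevelEmpty (k : ℕ) (E : State) : Prop where
  isEmptyState : IsEmptyState E
  one_le : 1 ≤ k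
  length_eq : E.length = 2 * k + 2
  admissible : Admissible E

lemma levelEmpty_of {k : ℕ} {E : State} (hE : IsEmptyState E) (hreach : Reaches (Sk k) E)
    (hlen : ell E = 2 * k + 1) : LevelEmpty k E := by
  obtain ⟨m, rfl⟩ := hreach
  refine ⟨hE, ?_, by have := List.length_pos_iff.2 hE.1; rw [ell] at hlen; omega,
    admissible_iterate (admissible_Sk k) m⟩
  by_contra hk
  obtain rfl : k = 0 := by omega
  have hhalt : ruleOf (Sk 0) = .halt := by
    have hH : HaltCond (Sk 0) := ⟨by simp [Sk], rfl, rfl⟩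
    rw [ruleOf, if_neg fun h => by simpa [Sk, leftmost] using h.1, if_pos hH]
  exact hE.2.2.2 (by rw [Function.iterate_fixed (P_eq_of_halt hhalt)]; exact hhalt)

namespace LevelEmpty

variable {k : ℕ} {E : State}

lemma forall_mem_even (hE : LevelEmpty k E) : ∀ x ∈ E, Even x := by
  obtain ⟨-, hn, hs, -⟩ := hE.isEmptyState
  rw [sigma] at hs
  rw [forall_mem_even_iff, ← even_sum_iff_of_nOf_eq_zero hn, ← Int.not_odd_iff_even]
  exact ⟨hn, fun h => by rw [if_pos h] at hs; omega⟩

lemma ruleOf_eq (hE : LevelEmpty k E) : ruleOf E = .zero :=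
  (ruleOf_eq_halt_or_zero hE.forall_mem_even).resolve_left hE.isEmptyState.2.2.2

lemma entry_emod_two (hE : LevelEmpty k E) (i : ℕ) : entry E i % 2 = 0 :=
  Int.even_iff.1 (even_entry_of_forall_mem_even hE.forall_mem_even i)

lemma entry_nonneg (hE : LevelEmpty k E) (i : ℕ) : 0 ≤ entry E i := by
  have := hE.admissible i
  have := hE.entry_emod_two i
  split_ifs at * <;> omega

lemma two_pow_emod_two (hE : LevelEmpty k E) : (2 : ℤ) ^ (2 * k) % 2 = 0 :=
  Int.even_iff.1 ((Int.even_pow' (by have := hE.one_le; omega)).2 even_two)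

lemma run_after_zero (hE : LevelEmpty k E) {t : ℕ} (ht : (t : ℤ) ≤ entry E 0)
    (ht' : (t : ℤ) < 2 ^ (2 * k + 1)) :
    (∀ s, 0 < s → s ≤ t → ruleOf (P^[s] E) = .increment) ∧
      (P^[t + 1] E).length = 2 * k + 4 ∧ sigma (P^[t + 1] E) = -1 ∧
      entry (P^[t + 1] E) 0 = entry E 0 - 1 - t ∧
      entry (P^[t + 1] E) 1 + (entry (P^[t + 1] E) 0 + 1) / 2 = entry E 1 + entry E 0 / 2 ∧
      (nOf (P^[t + 1] E) : ℤ) = 2 ^ (2 * k + 1) - 1 - t := by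
  have hr := hE.ruleOf_eq
  have hlen := hE.length_eq
  have hk := hE.one_le
  have hS : 2 ≤ E.length := by omega
  have hell : ell E = 2 * k + 1 := by rw [ell]; omega
  have hl0 : (P E).length = 2 * k + 4 := by rw [length_P_of_zero hr]; omega
  have hs0 : sigma (P E) = -1 := by
    rw [sigma, sum_P_of_zero hr hS, ← sigma, hE.isEmptyState.2.2.1]
  have he0 : entry (P E) 0 = entry E 0 - 1 := by
    rw [entry_P_of_zero hr hS, hell, if_neg (by omega), if_pos rfl, add_zero]
  have he1 : entry (P E) 1 = entry E 1 := by
    rw [entry_P_of_zero hr hS, hell, if_neg (by omega), if_neg one_ne_zero, add_zero, sub_zero]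
  have hn0 : (nOf (P E) : ℤ) = 2 ^ (2 * k + 1) - 1 := by
    rw [natCast_nOf_P_of_zero hr hS hE.forall_mem_even, hell]
  have hpow : (2 : ℤ) ^ (2 * k + 3) = 4 * 2 ^ (2 * k + 1) := by ring
  have hrun := forall_ruleOf_eq_increment (S := P E) (t := t) (by omega) fun s hs => by
    rw [he0, hs0, hn0, ell, hl0, show 2 * k + 4 - 1 = 2 * k + 3 by omega]
    exact ⟨by omega, .inr ⟨by omega, by omega⟩⟩
  obtain ⟨hl, hs, h0, h1, hn⟩ := iterate_of_forall_increment hrun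
  simp only [Function.iterate_succ_apply]
  refine ⟨fun s hs0 hst => ?_, by rw [hl, hl0], by rw [hs, hs0], by rw [h0, he0],
    by rw [h1, he0, he1, sub_add_cancel], by rw [hn, hn0, hs0]; ring⟩
  obtain ⟨s, rfl⟩ : ∃ s', s = s' + 1 := ⟨s - 1, by omega⟩
  rw [Function.iterate_succ_apply]
  exact hrun s (by omega)

lemma halve_after_zero (hE : LevelEmpty k E) (hA : entry E 0 < 2 ^ (2 * k + 1) - 1) {m : ℕ}
    (hm : (m : ℤ) = entry E 0) :
    ruleOf (P^[m + 1] E) = .halve ∧ (P^[m + 2] E).length = 2 * k + 3 ∧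
      sigma (P^[m + 2] E) = 1 ∧ entry (P^[m + 2] E) 0 = entry E 1 + entry E 0 / 2 ∧
      (nOf (P^[m + 2] E) : ℤ) = 2 ^ (2 * k) - 1 - entry E 0 / 2 := by
  have ha := hE.entry_emod_two 0
  have hpow : (2 : ℤ) ^ (2 * k + 1) = 2 * 2 ^ (2 * k) := by ring
  obtain ⟨-, hl1, hs1, h01, h11, hn1⟩ := hE.run_after_zero (t := m) (by omega) (by omega)
  have hX0 : entry (P^[m + 1] E) 0 = -1 := by rw [h01]; omega
  have hhalve : ruleOf (P^[m + 1] E) = .halve := ruleOf_eq_halve (by omega) hX0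
  have hX2 : P^[m + 2] E = (P^[m + 1] E).tail := by
    rw [Function.iterate_succ_apply', P_eq_of_halve hhalve]
  refine ⟨hhalve, by rw [hX2, List.length_tail, hl1]; rfl,
    by rw [hX2, sigma_tail hX0, hs1, neg_neg], by rw [hX2, entry_tail, ← h11, hX0]; simp, ?_⟩
  rw [hX2, nOf_tail (by omega)]
  omega

lemma run_after_halve (hE : LevelEmpty k E) (hA : entry E 0 < 2 ^ (2 * k + 1) - 1) {m : ℕ}
    (hm : (m : ℤ) = entry E 0) {t : ℕ} (ht : (t : ℤ) ≤ entry E 1 + entry E 0 / 2 + 1)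
    (ht' : (t : ℤ) ≤ 3 * 2 ^ (2 * k) + entry E 0 / 2) :
    (∀ s, 0 < s → s < m + 2 + t → s ≠ m + 1 → ruleOf (P^[s] E) = .increment) ∧
      (P^[m + 2 + t] E).length = 2 * k + 3 ∧ sigma (P^[m + 2 + t] E) = 1 ∧
      entry (P^[m + 2 + t] E) 0 = entry E 1 + entry E 0 / 2 - t ∧
      (nOf (P^[m + 2 + t] E) : ℤ) = 2 ^ (2 * k) - 1 - entry E 0 / 2 + t := by
  have hb := hE.entry_emod_two 1
  have hp := hE.two_pow_emod_two
  have hpow : (2 : ℤ) ^ (2 * k + 2) = 4 * 2 ^ (2 * k) := by ring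
  have hinc1 := (hE.run_after_zero (t := m) (by omega) (by omega)).1
  obtain ⟨-, hl2, hs2, he2, hn2⟩ := hE.halve_after_zero hA hm
  -- at `s = 0` the value of `n` may be `0`, but then `a_0 = a_1(E) + 2^{2k} - 1` is odd
  have hrun := forall_ruleOf_eq_increment (S := P^[m + 2] E) (t := t) (by omega) fun s hs => by
    rw [he2, hs2, hn2, ell, hl2, show 2 * k + 3 - 1 = 2 * k + 2 by omega, hpow, Int.odd_iff]
    refine ⟨by omega, ?_⟩
    by_cases hpos : 0 < 2 ^ (2 * k) - 1 - entry E 0 / 2 + 1 * (s : ℤ)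
    · exact .inr ⟨hpos, by omega⟩
    · exact .inl (by omega)
  obtain ⟨hl, hs, h0, -, hn⟩ := iterate_of_forall_increment hrun
  rw [add_comm (m + 2) t, Function.iterate_add_apply P t (m + 2) E]
  refine ⟨fun s hs0 hst hsm => ?_, by rw [hl, hl2], by rw [hs, hs2], by rw [h0, he2],
    by rw [hn, hn2, hs2]; ring⟩
  rcases Nat.lt_or_ge s (m + 1) with hlt | hge
  · exact hinc1 s hs0 (by omega)
  obtain ⟨s, rfl⟩ : ∃ s', s = s' + (m + 2) := ⟨s - (m + 2), by omega⟩
  rw [Function.iterate_add_apply]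
  exact hrun s (by omega)

lemma weaklyEmbanked (hE : LevelEmpty k E) (hA : entry E 0 < 2 ^ (2 * k + 1) - 1)
    (hB : entry E 1 < 3 * 2 ^ (2 * k) - 1) : WeaklyEmbanked E := by
  have ha0 := hE.entry_nonneg 0
  have hb0 := hE.entry_nonneg 1
  have hpow : (2 : ℤ) ^ (2 * k + 1) = 2 * 2 ^ (2 * k) := by ring
  obtain ⟨m, hm⟩ := Int.eq_ofNat_of_zero_le ha0
  obtain ⟨t, ht⟩ := Int.eq_ofNat_of_zero_le (show 0 ≤ entry E 1 + entry E 0 / 2 + 1 by omega)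
  obtain ⟨hinc, hl, -, h0, -⟩ := hE.run_after_halve hA hm.symm (t := t) (by omega) (by omega)
  have hhalve₂ : ruleOf (P^[m + 2 + t] E) = .halve :=
    ruleOf_eq_halve (by omega) (by rw [h0]; omega)
  refine ⟨hE.isEmptyState, m + 1, m + 2 + t, by omega, by omega, fun s hs0 hs hempty => ?_,
    (hE.halve_after_zero hA hm.symm).1, hhalve₂, hinc⟩
  obtain ⟨-, hn, hsig, -⟩ := hempty
  rcases Nat.lt_or_ge s (m + 2) with hlt | hge
  · obtain ⟨s, rfl⟩ : ∃ s', s = s' + 1 := ⟨s - 1, by omega⟩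
    obtain ⟨-, -, -, -, -, hn'⟩ := hE.run_after_zero (t := s) (by omega) (by omega)
    omega
  · obtain ⟨s, rfl⟩ : ∃ s', s = m + 2 + s' := ⟨s - (m + 2), by omega⟩
    obtain ⟨-, -, hsig', -⟩ := hE.run_after_halve hA hm.symm (t := s) (by omega) (by omega)
    rw [hsig] at hsig'
    exact absurd hsig' (by decide)

lemma not_weaklyEmbanked_of_le_entry_one (hE : LevelEmpty k E)
    (hA : entry E 0 < 2 ^ (2 * k + 1) - 1) (hB : ¬ entry E 1 < 3 * 2 ^ (2 * k) - 1) :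
    ¬ WeaklyEmbanked E := by
  have hb := hE.entry_emod_two 1
  have hp := hE.two_pow_emod_two
  have hpos : (0 : ℤ) < 2 ^ (2 * k) := by positivity
  have hpow : (2 : ℤ) ^ (2 * k + 2) = 4 * 2 ^ (2 * k) := by ring
  obtain ⟨m, hm⟩ := Int.eq_ofNat_of_zero_le (hE.entry_nonneg 0)
  obtain ⟨t, ht⟩ :=
    Int.eq_ofNat_of_zero_le (show 0 ≤ 3 * 2 ^ (2 * k) + entry E 0 / 2 by omega)
  obtain ⟨hinc, hl, -, h0, hn⟩ := hE.run_after_halve hA hm.symm (t := t) (by omega) (by omega)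
  have hover : ruleOf (P^[m + 2 + t] E) = .overflow := by
    refine ruleOf_eq_overflow (by omega) ?_ (by rw [h0, Int.even_iff]; omega)
    rw [hn, ell, hl, show 2 * k + 3 - 1 = 2 * k + 2 by omega]
    omega
  exact not_weaklyEmbanked_of_blocked (by omega) (by rw [hover]; decide) (by rw [hover]; decide)
    hinc

lemma not_weaklyEmbanked_of_le_entry_zero (hE : LevelEmpty k E)
    (hA : ¬ entry E 0 < 2 ^ (2 * k + 1) - 1) : ¬ WeaklyEmbanked E := by
  have ha := hE.entry_emod_two 0
  have hpos : (0 : ℤ) < 2 ^ (2 * k) := by positivity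
  have hpow : (2 : ℤ) ^ (2 * k + 1) = 2 * 2 ^ (2 * k) := by ring
  obtain ⟨t, ht⟩ := Int.eq_ofNat_of_zero_le (show 0 ≤ (2 : ℤ) ^ (2 * k + 1) - 1 by omega)
  obtain ⟨hinc, -, -, h0, -, hn⟩ := hE.run_after_zero (t := t) (by omega) (by omega)
  have hstop := ruleOf_eq_halt_or_zero
    ((forall_mem_even_iff (P^[t + 1] E)).2 ⟨by omega, by rw [Int.even_iff, h0]; omega⟩)
  refine not_weaklyEmbanked_of_blocked (u := t + 1) (j := 0) (by omega) ?_ ?_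
    fun s hs0 hs _ => hinc s hs0 (by omega) <;>
  rcases hstop with h | h <;> rw [h] <;> decide

end LevelEmpty

theorem statement_7_general (k : ℕ) (E : State) (hE : IsEmptyState E)
    (hreach : Reaches (Sk k) E)
    (hlen : ell E = 2 * k + 1) :
    WeaklyEmbanked E ↔
      entry E 0 < (2 : ℤ) ^ (2 * k + 1) - 1 ∧ entry E 1 < 3 * (2 : ℤ) ^ (2 * k) - 1 := by
  have hL := levelEmpty_of hE hreach hlen
  by_cases hA : entry E 0 < (2 : ℤ) ^ (2 * k + 1) - 1
  · by_cases hB : entry E 1 < 3 * (2 : ℤ) ^ (2 * k) - 1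
    · exact iff_of_true (hL.weaklyEmbanked hA hB) ⟨hA, hB⟩
    · exact iff_of_false (hL.not_weaklyEmbanked_of_le_entry_one hA hB) fun h => hB h.2
  · exact iff_of_false (hL.not_weaklyEmbanked_of_le_entry_zero hA) fun h => hA h.1

/-- Let `E` be an empty state with `S_k ↦ E`, not `S_{k+1} ↦ E`, and
`ℓ(E) = 2k + 1`.  Then `E` is weakly embanked iff `a_0(E) < 2^{2k+1} - 1` and
`a_1(E) < 3·2^{2k} - 1`. -/
theorem statement_7 (k : ℕ) (E : State) (hE : IsEmptyState E)
    (hreach : Reaches (Sk k) E) (hnreach : ¬ Reaches (Sk (k + 1)) E)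
    (hlen : ell E = 2 * k + 1) :
    WeaklyEmbanked E ↔
      entry E 0 < (2 : ℤ) ^ (2 * k + 1) - 1 ∧ entry E 1 < 3 * (2 : ℤ) ^ (2 * k) - 1 :=
  statement_7_general k E hE hreach hlen

end Skelet17
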